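/- Let R be a commutative ring and f_1, ..., f_r a regular sequence in R. Then the Koszul complex K_•(f_1,...,f_r) is a resolution of R/(f_1,...,f_r), i.e., its homology vanishes in negative degrees and equals R/(f_1,...,f_r) in degree zero. -/

import Mathlib

/-- The degree-`j` term of the Koszul complex on `r` elements, trivialized by the
standard basis: free module on the `j`-element subsets of `Fin r`. -/
abbrev KoszulTerm (R : Type*) [CommRing R] (r j : ℕ) : Type _ :=
  {s : Finset (Fin r) // s.card = j} → R

/-- The Koszul differential `K_{j+1} → K_j` associated to `f : Fin r → R`:
`d(e_{i₁} ∧ ⋯ ∧ e_{i_{j+1}}) = Σ_k (-1)^{k+1} f_{i_k} · e_{i₁} ∧ ⋯ ∧ ê_{i_k} ∧ ⋯`. -/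
noncomputable def koszulD (R : Type*) [CommRing R] (r : ℕ) (f : Fin r → R) (j : ℕ)
    (x : KoszulTerm R r (j + 1)) : KoszulTerm R r j := fun t =>
  ∑ i ∈ t.1ᶜ.attach,
    (-1 : R) ^ ((t.1.filter (· < i.1)).card) * f i.1 *
      x ⟨insert i.1 t.1, by
        rw [Finset.card_insert_of_notMem (Finset.mem_compl.mp i.2), t.2]⟩

/-!
Splitting chains according to whether the last basis vector `e_last` occurs identifies the
Koszul complex of `f₁, …, f_{r+1}` with the mapping cone of `± f_{r+1}` acting on the Koszul
complex `K'` of `f₁, …, f_r` (`withoutLast_koszulD`, `withLast_koszulD`). Both `d ∘ d = 0` and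
acyclicity then follow by induction on `r`. If `x` is a cycle, its `e_last`-part `x''` is a cycle
of `K'`, except in degree `0`, where the cycle condition only says `f_{r+1} x'' ∈ (f₁, …, f_r)`
and regularity of `f_{r+1}` modulo `(f₁, …, f_r)` is what makes `x''` a boundary. Subtracting
the boundary of a lift of `x''` leaves a cycle without `e_last`, i.e. a cycle of `K'`, which is a
boundary by induction.
-/

open Finset RingTheory.Sequence

namespace Koszul

variable {R : Type*} [CommRing R] {r : ℕ}

lemma koszulTerm_congr {j : ℕ} (x : KoszulTerm R r j) {s t : Finset (Fin r)} (hs : s.card = j)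
    (ht : t.card = j) (h : s = t) : x ⟨s, hs⟩ = x ⟨t, ht⟩ := by
  subst h; rfl

lemma koszulTerm_eq_zero_of_lt {j : ℕ} (x : KoszulTerm R r j) (h : r < j) : x = 0 :=
  funext fun t => absurd (t.2 ▸ card_le_univ t.1) (by simpa using h)

lemma koszulTerm_zero_ext {x y : KoszulTerm R r 0} (h : x ⟨∅, rfl⟩ = y ⟨∅, rfl⟩) : x = y := by
  funext t
  obtain rfl : t = ⟨∅, rfl⟩ := Subtype.ext (card_eq_zero.mp t.2)
  exact h

lemma koszulD_apply (f : Fin r → R) (j : ℕ) (x : KoszulTerm R r (j + 1))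
    (t : {s : Finset (Fin r) // s.card = j}) :
    koszulD R r f j x t = ∑ i : Fin r,
      if h : i ∈ t.1 then 0 else
        (-1 : R) ^ (t.1.filter (· < i)).card * f i *
          x ⟨insert i t.1, by rw [card_insert_of_notMem h, t.2]⟩ := by
  rw [← sum_subset (subset_univ t.1ᶜ) fun i _ hi => dif_pos (by simpa using hi),
    ← sum_attach t.1ᶜ]
  exact sum_congr rfl fun i _ => by rw [dif_neg (mem_compl.mp i.2)]

lemma koszulD_add (f : Fin r → R) (j : ℕ) (x y : KoszulTerm R r (j + 1)) :
    koszulD R r f j (x + y) = koszulD R r f j x + koszulD R r f j y := by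
  funext t
  simp only [Pi.add_apply, koszulD_apply, ← sum_add_distrib]
  refine sum_congr rfl fun i _ => ?_
  split_ifs <;> simp only [mul_add, add_zero]

lemma koszulD_smul (f : Fin r → R) (j : ℕ) (c : R) (x : KoszulTerm R r (j + 1)) :
    koszulD R r f j (c • x) = c • koszulD R r f j x := by
  funext t
  simp only [Pi.smul_apply, koszulD_apply, smul_eq_mul, mul_sum]
  refine sum_congr rfl fun i _ => ?_
  split_ifs
  · rw [mul_zero]
  · ring

lemma koszulD_zero (f : Fin r → R) (j : ℕ) : koszulD R r f j 0 = 0 := by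
  simpa using koszulD_smul f j 0 0

lemma koszulD_sub (f : Fin r → R) (j : ℕ) (x y : KoszulTerm R r (j + 1)) :
    koszulD R r f j (x - y) = koszulD R r f j x - koszulD R r f j y := by
  rw [eq_sub_iff_add_eq, ← koszulD_add, sub_add_cancel]

lemma koszulD_zero_apply_empty (f : Fin r → R) (y : KoszulTerm R r 1) :
    koszulD R r f 0 y ⟨∅, rfl⟩ = ∑ i : Fin r, f i * y ⟨{i}, card_singleton i⟩ := by
  rw [koszulD_apply]
  refine sum_congr rfl fun i _ => ?_
  rw [dif_neg (notMem_empty i)]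
  simp only [filter_empty, card_empty, pow_zero, one_mul]
  exact congrArg (f i * ·) (koszulTerm_congr y _ _ (insert_empty_eq i))

theorem exists_koszulD_zero_eq_iff (f : Fin r → R) (x : KoszulTerm R r 0) :
    (∃ y : KoszulTerm R r 1, koszulD R r f 0 y = x) ↔
      x ⟨∅, rfl⟩ ∈ Ideal.span (Set.range f) := by
  constructor
  · rintro ⟨y, rfl⟩
    rw [koszulD_zero_apply_empty]
    exact sum_mem fun i _ => Ideal.mul_mem_right _ _ (Ideal.subset_span ⟨i, rfl⟩)
  · intro hx
    obtain ⟨c, hc⟩ := (Submodule.mem_span_range_iff_exists_fun R).mp hx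
    refine ⟨fun t => ∑ i ∈ t.1, c i, koszulTerm_zero_ext ?_⟩
    rw [koszulD_zero_apply_empty, ← hc]
    exact sum_congr rfl fun i _ => by rw [sum_singleton, smul_eq_mul, mul_comm]

lemma last_notMem_map_castSuccEmb (s : Finset (Fin r)) :
    Fin.last r ∉ s.map Fin.castSuccEmb := by
  simp [Fin.castSucc_ne_last]

lemma filter_lt_castSucc_map_castSuccEmb (s : Finset (Fin r)) (i : Fin r) :
    (s.map Fin.castSuccEmb).filter (· < i.castSucc) = (s.filter (· < i)).map Fin.castSuccEmb := by
  simp [filter_map, Function.comp_def, Fin.castSucc_lt_castSucc_iff]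

lemma filter_lt_last_map_castSuccEmb (s : Finset (Fin r)) :
    (s.map Fin.castSuccEmb).filter (· < Fin.last r) = s.map Fin.castSuccEmb :=
  filter_true_of_mem fun a ha => by
    obtain ⟨i, -, rfl⟩ := mem_map.mp ha
    exact Fin.castSucc_lt_last i

noncomputable def castSuccPreimage (s : Finset (Fin (r + 1))) : Finset (Fin r) :=
  s.preimage Fin.castSuccEmb Fin.castSuccEmb.injective.injOn

lemma map_castSuccPreimage {s : Finset (Fin (r + 1))} (h : Fin.last r ∉ s) :
    (castSuccPreimage s).map Fin.castSuccEmb = s := by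
  ext a
  simp only [castSuccPreimage, mem_map, mem_preimage, Fin.castSuccEmb_apply]
  refine ⟨fun ⟨i, hi, hia⟩ => hia ▸ hi, fun ha => ?_⟩
  obtain ⟨i, rfl⟩ := Fin.exists_castSucc_eq.mpr fun hl => h (hl ▸ ha)
  exact ⟨i, ha, rfl⟩

lemma card_castSuccPreimage {s : Finset (Fin (r + 1))} (h : Fin.last r ∉ s) :
    (castSuccPreimage s).card = s.card := by
  rw [← card_map Fin.castSuccEmb, map_castSuccPreimage h]

/- A chain on `Fin (r + 1)` is written uniquely as `x' + x'' ∧ e_last` with `x'`, `x''` chains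
on `Fin r`; these are `withoutLast` (giving `x'`), `withLast` (giving `x''`) and `glue`. -/
def withoutLast {j : ℕ} (x : KoszulTerm R (r + 1) j) : KoszulTerm R r j := fun s =>
  x ⟨s.1.map Fin.castSuccEmb, by rw [card_map, s.2]⟩

def withLast {j : ℕ} (x : KoszulTerm R (r + 1) (j + 1)) : KoszulTerm R r j := fun s =>
  x ⟨insert (Fin.last r) (s.1.map Fin.castSuccEmb), by
    rw [card_insert_of_notMem (last_notMem_map_castSuccEmb _), card_map, s.2]⟩

noncomputable def glue {j : ℕ} (a : KoszulTerm R r (j + 1)) (b : KoszulTerm R r j) :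
    KoszulTerm R (r + 1) (j + 1) := fun s =>
  if h : Fin.last r ∈ s.1 then
    b ⟨castSuccPreimage (s.1.erase (Fin.last r)), by
      rw [card_castSuccPreimage (notMem_erase _ _), card_erase_of_mem h, s.2, Nat.add_sub_cancel]⟩
  else a ⟨castSuccPreimage s.1, by rw [card_castSuccPreimage h, s.2]⟩

@[simp] lemma withoutLast_glue {j : ℕ} (a : KoszulTerm R r (j + 1)) (b : KoszulTerm R r j) :
    withoutLast (glue a b) = a := by
  funext s
  simp only [withoutLast, glue, dif_neg (last_notMem_map_castSuccEmb s.1)]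
  exact koszulTerm_congr a _ _ (preimage_map _ _)

@[simp] lemma withLast_glue {j : ℕ} (a : KoszulTerm R r (j + 1)) (b : KoszulTerm R r j) :
    withLast (glue a b) = b := by
  funext s
  simp only [withLast, glue, dif_pos (mem_insert_self _ _)]
  refine koszulTerm_congr b _ _ ?_
  rw [erase_insert (last_notMem_map_castSuccEmb _)]
  exact preimage_map _ _

lemma glue_withoutLast_withLast {j : ℕ} (x : KoszulTerm R (r + 1) (j + 1)) :
    glue (withoutLast x) (withLast x) = x := by
  funext t
  by_cases h : Fin.last r ∈ t.1
  · simp only [glue, withLast, dif_pos h]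
    refine koszulTerm_congr x _ _ ?_
    rw [map_castSuccPreimage (notMem_erase _ _), insert_erase h]
  · simp only [glue, withoutLast, dif_neg h]
    exact koszulTerm_congr x _ _ (map_castSuccPreimage h)

lemma ext_withoutLast_withLast {j : ℕ} {x y : KoszulTerm R (r + 1) (j + 1)}
    (h₁ : withoutLast x = withoutLast y) (h₂ : withLast x = withLast y) : x = y := by
  rw [← glue_withoutLast_withLast x, h₁, h₂, glue_withoutLast_withLast]

lemma withoutLast_apply_empty (x : KoszulTerm R (r + 1) 0) :
    withoutLast x ⟨∅, rfl⟩ = x ⟨∅, rfl⟩ :=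
  koszulTerm_congr x _ _ (map_empty _)

lemma withoutLast_koszulD (f : Fin (r + 1) → R) (j : ℕ) (x : KoszulTerm R (r + 1) (j + 1)) :
    withoutLast (koszulD R (r + 1) f j x) =
      koszulD R r (Fin.init f) j (withoutLast x) + ((-1 : R) ^ j * f (Fin.last r)) • withLast x := by
  funext s
  simp only [withoutLast, withLast, Pi.add_apply, Pi.smul_apply, smul_eq_mul]
  rw [koszulD_apply, koszulD_apply, Fin.sum_univ_castSucc,
    dif_neg (last_notMem_map_castSuccEmb s.1)]
  congr 1
  · refine sum_congr rfl fun i _ => ?_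
    by_cases h : i ∈ s.1
    · rw [dif_pos (by simpa using h), dif_pos h]
    · rw [dif_neg (by simpa using h), dif_neg h, filter_lt_castSucc_map_castSuccEmb, card_map]
      exact congrArg _ (koszulTerm_congr x _ _ (map_insert _ _ _).symm)
  · simp only [filter_lt_last_map_castSuccEmb, card_map, s.2, mul_assoc]

lemma withLast_koszulD (f : Fin (r + 1) → R) (j : ℕ) (x : KoszulTerm R (r + 1) (j + 2)) :
    withLast (koszulD R (r + 1) f (j + 1) x) = koszulD R r (Fin.init f) j (withLast x) := by
  funext s
  simp only [withLast]
  rw [koszulD_apply, koszulD_apply, Fin.sum_univ_castSucc, dif_pos (mem_insert_self _ _),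
    add_zero]
  refine sum_congr rfl fun i _ => ?_
  have hmem : i.castSucc ∈ insert (Fin.last r) (s.1.map Fin.castSuccEmb) ↔ i ∈ s.1 := by
    simp [Fin.castSucc_ne_last]
  by_cases h : i ∈ s.1
  · rw [dif_pos (hmem.mpr h), dif_pos h]
  · rw [dif_neg (mt hmem.mp h), dif_neg h, filter_insert,
      if_neg (Fin.castSucc_lt_last i).not_gt, filter_lt_castSucc_map_castSuccEmb, card_map]
    refine congrArg _ (koszulTerm_congr x _ _ ?_)
    rw [insert_comm, map_insert, Fin.castSuccEmb_apply]

@[simp] lemma withoutLast_sub {j : ℕ} (x y : KoszulTerm R (r + 1) j) :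
    withoutLast (x - y) = withoutLast x - withoutLast y := rfl

@[simp] lemma withLast_sub {j : ℕ} (x y : KoszulTerm R (r + 1) (j + 1)) :
    withLast (x - y) = withLast x - withLast y := rfl

theorem koszulD_koszulD (f : Fin r → R) (j : ℕ) (x : KoszulTerm R r (j + 2)) :
    koszulD R r f j (koszulD R r f (j + 1) x) = 0 := by
  induction r generalizing j with
  | zero => rw [koszulTerm_eq_zero_of_lt x (by omega), koszulD_zero, koszulD_zero]
  | succ r ih =>
    have hsign : (-1 : R) ^ (j + 1) * f (Fin.last r) + (-1) ^ j * f (Fin.last r) = 0 := by ring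
    have hwithout : withoutLast (koszulD R (r + 1) f j (koszulD R (r + 1) f (j + 1) x)) = 0 := by
      rw [withoutLast_koszulD, withoutLast_koszulD, withLast_koszulD, koszulD_add, koszulD_smul,
        ih, zero_add, ← add_smul, hsign, zero_smul]
    cases j with
    | zero => exact koszulTerm_zero_ext ((withoutLast_apply_empty _).symm.trans congr($hwithout _))
    | succ m =>
      refine ext_withoutLast_withLast hwithout ?_
      rw [withLast_koszulD, withLast_koszulD, ih]
      rfl

theorem isWeaklyRegular_ofFn_succ_iff (f : Fin (r + 1) → R) :
    IsWeaklyRegular R (List.ofFn f) ↔ IsWeaklyRegular R (List.ofFn (Fin.init f)) ∧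
      IsSMulRegular (R ⧸ Ideal.span (Set.range (Fin.init f))) (f (Fin.last r)) := by
  have hspan : (Ideal.ofList (List.ofFn (Fin.init f)) • ⊤ : Submodule R R) =
      Ideal.span (Set.range (Fin.init f)) := by
    rw [smul_eq_mul, Ideal.mul_top]
    simp only [Ideal.ofList, List.mem_ofFn]
    rfl
  rw [List.ofFn_succ', List.concat_eq_append, isWeaklyRegular_append_iff,
    isWeaklyRegular_singleton_iff, ← hspan]
  rfl

def KoszulAcyclic (R : Type*) [CommRing R] (r : ℕ) (f : Fin r → R) : Prop :=
  ∀ j (x : KoszulTerm R r (j + 1)), koszulD R r f j x = 0 →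
    ∃ y : KoszulTerm R r (j + 2), koszulD R r f (j + 1) y = x

lemma exists_koszulD_eq_withLast {f : Fin (r + 1) → R} (hacyc : KoszulAcyclic R r (Fin.init f))
    (hreg : IsSMulRegular (R ⧸ Ideal.span (Set.range (Fin.init f))) (f (Fin.last r)))
    {j : ℕ} {x : KoszulTerm R (r + 1) (j + 1)} (hx : koszulD R (r + 1) f j x = 0) :
    ∃ w, koszulD R r (Fin.init f) j w = withLast x := by
  have hcycle := congr(withoutLast $hx)
  rw [withoutLast_koszulD] at hcycle
  cases j with
  | zero =>
    refine (exists_koszulD_zero_eq_iff _ _).mpr (mem_of_isSMulRegular_quotient_of_smul_mem hreg ?_)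
    have hboundary := (exists_koszulD_zero_eq_iff (Fin.init f) _).mp ⟨withoutLast x, rfl⟩
    have h0 := congr($hcycle ⟨∅, rfl⟩)
    simp only [Pi.add_apply, Pi.smul_apply, smul_eq_mul, pow_zero, one_mul] at h0
    rw [smul_eq_mul, eq_neg_of_add_eq_zero_right h0]
    exact neg_mem hboundary
  | succ m =>
    refine hacyc m (withLast x) ?_
    rw [← withLast_koszulD, hx]
    rfl

theorem koszulAcyclic_succ {f : Fin (r + 1) → R} (hacyc : KoszulAcyclic R r (Fin.init f))
    (hreg : IsSMulRegular (R ⧸ Ideal.span (Set.range (Fin.init f))) (f (Fin.last r))) :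
    KoszulAcyclic R (r + 1) f := by
  intro j x hx
  obtain ⟨w, hw⟩ := exists_koszulD_eq_withLast hacyc hreg hx
  set z := x - koszulD R (r + 1) f (j + 1) (glue 0 w) with hz
  have hz_withLast : withLast z = 0 := by
    rw [hz, withLast_sub, withLast_koszulD, withLast_glue, hw, sub_self]
  have hz_withoutLast : withoutLast z = withoutLast x - ((-1 : R) ^ (j + 1) * f (Fin.last r)) • w := by
    rw [hz, withoutLast_sub, withoutLast_koszulD, withoutLast_glue, withLast_glue, koszulD_zero,
      zero_add]
  have hz_cycle : koszulD R r (Fin.init f) j (withoutLast z) = 0 := by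
    have h := withoutLast_koszulD f j z
    rwa [hz, koszulD_sub, hx, koszulD_koszulD, sub_zero, ← hz, hz_withLast, smul_zero, add_zero,
      eq_comm] at h
  obtain ⟨u, hu⟩ := hacyc j _ hz_cycle
  refine ⟨glue u w, ext_withoutLast_withLast ?_ ?_⟩
  · rw [withoutLast_koszulD, withoutLast_glue, withLast_glue, hu, hz_withoutLast, sub_add_cancel]
  · rw [withLast_koszulD, withLast_glue, hw]

theorem koszulAcyclic_of_isWeaklyRegular (f : Fin r → R) (hreg : IsWeaklyRegular R (List.ofFn f)) :
    KoszulAcyclic R r f := by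
  induction r with
  | zero =>
    intro j x _
    exact ⟨0, by rw [koszulD_zero, koszulTerm_eq_zero_of_lt x j.succ_pos]⟩
  | succ r ih =>
    obtain ⟨hinit, hlast⟩ := (isWeaklyRegular_ofFn_succ_iff f).mp hreg
    exact koszulAcyclic_succ (ih _ hinit) hlast

end Koszul

/-- If `f 0, …, f (r-1)` is a regular sequence in `R`, then the
Koszul complex `K_•(f)` is a resolution of `R/(f 0, …, f (r-1))`: it is a complex
(`d ∘ d = 0`), its homology vanishes in all (homologically) positive degrees, and
in degree zero the image of the differential, under the canonical identification
`K_0 ≅ R` (evaluation at `∅`), is exactly the ideal `(f 0, …, f (r-1))`, so that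
`H_0 ≅ R/(f 0, …, f (r-1))`. -/
theorem koszul_complex_resolution_of_regular_sequence (R : Type*) [CommRing R]
    (r : ℕ) (f : Fin r → R)
    (hreg : RingTheory.Sequence.IsRegular R (List.ofFn f)) :
    (∀ j (x : KoszulTerm R r (j + 2)),
        koszulD R r f j (koszulD R r f (j + 1) x) = 0) ∧
    (∀ j (x : KoszulTerm R r (j + 1)), koszulD R r f j x = 0 →
        ∃ y : KoszulTerm R r (j + 2), koszulD R r f (j + 1) y = x) ∧
    (∀ x : KoszulTerm R r 0,
        (∃ y : KoszulTerm R r 1, koszulD R r f 0 y = x) ↔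
          x ⟨∅, rfl⟩ ∈ Ideal.span (Set.range f)) :=
  ⟨Koszul.koszulD_koszulD f, Koszul.koszulAcyclic_of_isWeaklyRegular f hreg.toIsWeaklyRegular,
    Koszul.exists_koszulD_zero_eq_iff f⟩
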